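/- arXiv:2411.16435 — 3 statements merged into one kernel-verified Lean document; each statement's English description precedes it below -/
import Mathlib

section
/- Let η ∈ [0,1] and let k be an odd natural number with k·arcsin(η) ≤ π/2. Then |sin(k·arcsin(η))| ≥ η. Moreover, if additionally (k+2)·arcsin(η) > π/2, then sin(k·arcsin(η)) > sin(πk/(2(k+2))) ≥ 1/2. -/
/-! Everything follows from `sin` being increasing on `[-π/2, π/2]`: `θ = arcsin η ≤ kθ ≤ π/2`
gives the gain, and `(k+2)θ > π/2` means `kθ > πk/(2(k+2)) ≥ π/6`. -/

open Real

namespace Real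

theorem sin_le_sin_mul_of_one_le {x c : ℝ} (hx : 0 ≤ x) (hc : 1 ≤ c) (hcx : c * x ≤ π / 2) :
    sin x ≤ sin (c * x) := by
  have hxc : x ≤ c * x := le_mul_of_one_le_left hx hc
  exact strictMonoOn_sin.monotoneOn ⟨by linarith [pi_pos], hxc.trans hcx⟩
    ⟨by linarith [pi_pos], hcx⟩ hxc

theorem pi_mul_div_two_mul_add_two_mem_Icc {k : ℝ} (hk : 1 ≤ k) :
    π * k / (2 * (k + 2)) ∈ Set.Icc (π / 6) (π / 2) := by
  have hπ := pi_pos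
  constructor
  · rw [div_le_div_iff₀ (by norm_num) (by positivity)]
    nlinarith
  · rw [div_le_div_iff₀ (by positivity) (by norm_num)]
    nlinarith

theorem one_half_le_sin_pi_mul_div_two_mul_add_two {k : ℝ} (hk : 1 ≤ k) :
    1 / 2 ≤ sin (π * k / (2 * (k + 2))) := by
  obtain ⟨hlow, hhigh⟩ := pi_mul_div_two_mul_add_two_mem_Icc hk
  have hπ := pi_pos
  rw [← sin_pi_div_six]
  exact strictMonoOn_sin.monotoneOn ⟨by linarith, by linarith⟩ ⟨by linarith, hhigh⟩ hlow

theorem sin_pi_mul_div_two_mul_add_two_lt_sin_mul {x k : ℝ} (hk : 1 ≤ k)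
    (hkx : k * x ≤ π / 2) (hgt : π / 2 < (k + 2) * x) :
    sin (π * k / (2 * (k + 2))) < sin (k * x) := by
  have hπ := pi_pos
  obtain ⟨hlow, hhigh⟩ := pi_mul_div_two_mul_add_two_mem_Icc hk
  have hlt : π * k / (2 * (k + 2)) < k * x := by
    rw [div_lt_iff₀ (by positivity)]
    nlinarith
  exact strictMonoOn_sin ⟨by linarith, hhigh⟩ ⟨by linarith, hkx⟩ hlt

end Real

/-- for `η ∈ [0,1]` and odd `k` with `k·arcsin η ≤ π/2` one has
`|sin(k·arcsin η)| ≥ η`; if moreover `(k+2)·arcsin η > π/2` then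
`sin(k·arcsin η) > sin(πk/(2(k+2))) ≥ 1/2`. -/
theorem amplitude_amplification_gain (η : ℝ) (hη : η ∈ Set.Icc (0:ℝ) 1)
    (k : ℕ) (hk : Odd k) (hle : (k : ℝ) * Real.arcsin η ≤ π / 2) :
    η ≤ |Real.sin ((k : ℝ) * Real.arcsin η)| ∧
    (((k : ℝ) + 2) * Real.arcsin η > π / 2 →
      Real.sin ((k : ℝ) * Real.arcsin η) > Real.sin (π * k / (2 * ((k : ℝ) + 2))) ∧
      Real.sin (π * k / (2 * ((k : ℝ) + 2))) ≥ 1 / 2) := by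
  obtain ⟨hη0, hη1⟩ := hη
  have hk1 : (1 : ℝ) ≤ k := by exact_mod_cast hk.pos
  have hgain : η ≤ sin (k * arcsin η) := by
    calc η = sin (arcsin η) := (sin_arcsin (by linarith) hη1).symm
      _ ≤ sin (k * arcsin η) := sin_le_sin_mul_of_one_le (arcsin_nonneg.mpr hη0) hk1 hle
  refine ⟨hgain.trans (le_abs_self _), fun hgt => ?_⟩
  exact ⟨sin_pi_mul_div_two_mul_add_two_lt_sin_mul hk1 hle hgt,
    one_half_le_sin_pi_mul_div_two_mul_add_two hk1⟩
end

section
/- Let η, σ ∈ (0, 3/4] satisfy |σ − η| ≤ η/(4π+1) and σ ≤ π/6. Let k be an odd positive integer with k·σ ≤ π/2, and set ĝ(x) = sin(k·arcsin(x)). If additionally ĝ(σ) > 1/2, then |ĝ(σ) − ĝ(η)| ≤ 1/4, and hence ĝ(η) > 1/4. -/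
/-!
`ĝ = sin ∘ (k * ·) ∘ arcsin` is a composition of Lipschitz maps: `sin` is 1-Lipschitz, and
`arcsin` is 2-Lipschitz on `[-3/4, 3/4]` since its derivative `1/√(1 - x²)` is at most `4/√7`
there. The error bound relative to `η` turns into `|σ - η| ≤ σ/(4π)`, so
`|ĝ(σ) - ĝ(η)| ≤ 2kσ/(4π) ≤ 1/4` because `kσ ≤ π/2`; with `ĝ(σ) > 1/2` this gives `ĝ(η) > 1/4`.
-/

open Real

theorem Real.abs_arcsin_sub_arcsin_le {c x y : ℝ} (hc : c < 1) (hx : x ∈ Set.Icc (-c) c)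
    (hy : y ∈ Set.Icc (-c) c) :
    |arcsin x - arcsin y| ≤ |x - y| / √(1 - c ^ 2) := by
  have hderiv_le : ∀ z ∈ Set.Icc (-c) c, ‖1 / √(1 - z ^ 2)‖ ≤ 1 / √(1 - c ^ 2) := by
    rintro z ⟨hz₁, hz₂⟩
    have hzc : z ^ 2 ≤ c ^ 2 := sq_le_sq' hz₁ hz₂
    have hc₀ : 0 < 1 - c ^ 2 := by nlinarith
    rw [norm_of_nonneg (by positivity)]
    exact one_div_le_one_div_of_le (sqrt_pos.2 hc₀) (sqrt_le_sqrt (by linarith))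
  have hderiv : ∀ z ∈ Set.Icc (-c) c,
      HasDerivWithinAt arcsin (1 / √(1 - z ^ 2)) (Set.Icc (-c) c) z := fun z hz =>
    (hasDerivAt_arcsin (by linarith [hz.1]) (by linarith [hz.2])).hasDerivWithinAt
  simpa [Real.norm_eq_abs, div_eq_inv_mul, mul_comm] using
    (convex_Icc (-c) c).norm_image_sub_le_of_norm_hasDerivWithin_le hderiv hderiv_le hy hx

theorem Real.abs_arcsin_sub_arcsin_le_two_mul {x y : ℝ} (hx : x ∈ Set.Icc (-(3 / 4)) (3 / 4))
    (hy : y ∈ Set.Icc (-(3 / 4)) (3 / 4)) :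
    |arcsin x - arcsin y| ≤ 2 * |x - y| := by
  have hsqrt : (1 / 2 : ℝ) ≤ √(1 - (3 / 4) ^ 2) := le_sqrt_of_sq_le (by norm_num)
  calc |arcsin x - arcsin y| ≤ |x - y| / √(1 - (3 / 4) ^ 2) :=
        abs_arcsin_sub_arcsin_le (by norm_num) hx hy
    _ ≤ |x - y| / (1 / 2) := by gcongr
    _ = 2 * |x - y| := by ring

theorem abs_sub_le_div_of_abs_sub_le_div_add_one {a η σ : ℝ} (ha : 0 < a)
    (h : |σ - η| ≤ η / (a + 1)) : |σ - η| ≤ σ / a := by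
  have hησ : η - σ ≤ η / (a + 1) := ((le_abs_self _).trans_eq (abs_sub_comm η σ)).trans h
  refine h.trans ?_
  rw [div_le_div_iff₀ (by linarith) ha]
  rw [le_div_iff₀ (by linarith)] at hησ
  linarith

theorem amplified_efficiency_lower_bound_general (η σ : ℝ)
    (hη : η ∈ Set.Ioc (0:ℝ) (3/4)) (hσ : σ ∈ Set.Ioc (0:ℝ) (3/4))
    (hest : |σ - η| ≤ η / (4 * π + 1))
    (k : ℕ) (hkσ : (k : ℝ) * σ ≤ π / 2)
    (hghalf : Real.sin ((k : ℝ) * Real.arcsin σ) > 1 / 2) :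
    |Real.sin ((k : ℝ) * Real.arcsin σ) - Real.sin ((k : ℝ) * Real.arcsin η)| ≤ 1 / 4 ∧
    Real.sin ((k : ℝ) * Real.arcsin η) > 1 / 4 := by
  have hrel : |σ - η| ≤ σ / (4 * π) := abs_sub_le_div_of_abs_sub_le_div_add_one (by positivity) hest
  have harcsin : |arcsin σ - arcsin η| ≤ 2 * |σ - η| :=
    abs_arcsin_sub_arcsin_le_two_mul ⟨by linarith [hσ.1], hσ.2⟩ ⟨by linarith [hη.1], hη.2⟩
  have hamp : |sin (k * arcsin σ) - sin (k * arcsin η)| ≤ 1 / 4 :=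
    calc |sin (k * arcsin σ) - sin (k * arcsin η)| ≤ |k * arcsin σ - k * arcsin η| :=
          abs_sin_sub_sin_le _ _
      _ = k * |arcsin σ - arcsin η| := by rw [← mul_sub, abs_mul, Nat.abs_cast]
      _ ≤ k * (2 * (σ / (4 * π))) := by gcongr; linarith
      _ = k * σ / (2 * π) := by ring
      _ ≤ 1 / 4 := by rw [div_le_iff₀ (by positivity)]; linarith
  exact ⟨hamp, by linarith [(abs_le.mp hamp).2]⟩

/-- error propagation through amplitude amplification. If
`|σ − η| ≤ η/(4π+1)`, `σ ≤ π/6`, `k` is odd and positive with `kσ ≤ π/2`, and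
`ĝ(σ) = sin(k arcsin σ) > 1/2`, then `|ĝ(σ) − ĝ(η)| ≤ 1/4` and `ĝ(η) > 1/4`. -/
theorem amplified_efficiency_lower_bound (η σ : ℝ)
    (hη : η ∈ Set.Ioc (0:ℝ) (3/4)) (hσ : σ ∈ Set.Ioc (0:ℝ) (3/4))
    (hest : |σ - η| ≤ η / (4 * π + 1)) (hσπ : σ ≤ π / 6)
    (k : ℕ) (hk : Odd k) (hk0 : 0 < k) (hkσ : (k : ℝ) * σ ≤ π / 2)
    (hghalf : Real.sin ((k : ℝ) * Real.arcsin σ) > 1 / 2) :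
    |Real.sin ((k : ℝ) * Real.arcsin σ) - Real.sin ((k : ℝ) * Real.arcsin η)| ≤ 1 / 4 ∧
    Real.sin ((k : ℝ) * Real.arcsin η) > 1 / 4 :=
  amplified_efficiency_lower_bound_general η σ hη hσ hest k hkσ hghalf
end

section
/- Let γ > 0, σ, η, σ̂, η̂ ∈ (0,1] with σ̂ ≥ 1/2, and suppose |σ − η| ≤ min{ε·η/(2π+1), η/(4π+1)} for some ε ∈ (0,1], |σ̂ − η̂| ≤ π·σ^{−1}·|σ − η|, and η ≤ ((4π+1)/(4π))·σ. Set x_norm = γ·η (interpreted as |x|), γ̂ = γ·η/η̂ and γ̂_σ = γ·σ/σ̂. Then |γ̂_σ − γ̂|·η̂ ≤ ε·x_norm. -/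
open Real

/-! The cross term `σ η̂ − η σ̂` splits as `σ (η̂ − σ̂) + σ̂ (σ − η)`. The amplification bound turns
the first part into `π |σ − η|`, and dividing by `σ̂ ≥ 1/2` costs a factor 2, so the error is at
most `γ (2π + 1) |σ − η| ≤ ε γ η`. -/

lemma abs_div_sub_div_mul_le {a b c d : ℝ} (ha : 0 ≤ a) (hb : 0 < b) (hd : 0 < d) :
    |a / b - c / d| * d ≤ a * |b - d| / b + |a - c| := by
  have hsplit : (a / b - c / d) * d = a * (d - b) / b + (a - c) := by
    field_simp
    ring
  calc |a / b - c / d| * d = |a * (d - b) / b + (a - c)| := by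
        rw [← hsplit, abs_mul, abs_of_pos hd]
    _ ≤ |a * (d - b) / b| + |a - c| := abs_add_le _ _
    _ = a * |b - d| / b + |a - c| := by
        rw [abs_div, abs_mul, abs_of_nonneg ha, abs_of_pos hb, abs_sub_comm]

theorem normalization_error_bound_general (γ σ η σhat ηhat ε : ℝ)
    (hγ : 0 < γ)
    (hσ : σ ∈ Set.Ioc (0:ℝ) 1)
    (hηhat : ηhat ∈ Set.Ioc (0:ℝ) 1)
    (hσhalf : 1 / 2 ≤ σhat)
    (hest : |σ - η| ≤ min (ε * η / (2 * π + 1)) (η / (4 * π + 1)))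
    (hhat : |σhat - ηhat| ≤ π * σ⁻¹ * |σ - η|) :
    |γ * σ / σhat - γ * η / ηhat| * ηhat ≤ ε * (γ * η) := by
  have hσhat : 0 < σhat := by linarith
  have hamp : σ * |σhat - ηhat| ≤ π * |σ - η| := by
    calc σ * |σhat - ηhat| ≤ σ * (π * σ⁻¹ * |σ - η|) := by gcongr; exact hσ.1.le
      _ = π * |σ - η| := by field_simp [hσ.1.ne']
  have hinv : 1 / σhat ≤ 2 := by rw [div_le_iff₀ hσhat]; linarith
  have hδ : (2 * π + 1) * |σ - η| ≤ ε * η := by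
    rw [← le_div_iff₀' (by positivity)]
    exact hest.trans (min_le_left _ _)
  calc |γ * σ / σhat - γ * η / ηhat| * ηhat
      ≤ γ * σ * |σhat - ηhat| / σhat + |γ * σ - γ * η| :=
        abs_div_sub_div_mul_le (mul_pos hγ hσ.1).le hσhat hηhat.1
    _ = γ * (σ * |σhat - ηhat|) * (1 / σhat) + γ * |σ - η| := by
        rw [← mul_sub, abs_mul, abs_of_pos hγ]
        ring
    _ ≤ γ * (π * |σ - η|) * 2 + γ * |σ - η| := by gcongr
    _ = γ * ((2 * π + 1) * |σ - η|) := by ring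
    _ ≤ γ * (ε * η) := by gcongr
    _ = ε * (γ * η) := by ring

/-- the final normalization-error estimate. With `|x| = γη`,
`γ̂ = γη/η̂` and `γ̂_σ = γσ/σ̂`, the hypotheses imply `|γ̂_σ − γ̂|·η̂ ≤ ε·|x|`. -/
theorem normalization_error_bound (γ σ η σhat ηhat ε : ℝ)
    (hγ : 0 < γ)
    (hσ : σ ∈ Set.Ioc (0:ℝ) 1) (hη : η ∈ Set.Ioc (0:ℝ) 1)
    (hσhat : σhat ∈ Set.Ioc (0:ℝ) 1) (hηhat : ηhat ∈ Set.Ioc (0:ℝ) 1)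
    (hσhalf : 1 / 2 ≤ σhat)
    (hε : ε ∈ Set.Ioc (0:ℝ) 1)
    (hest : |σ - η| ≤ min (ε * η / (2 * π + 1)) (η / (4 * π + 1)))
    (hhat : |σhat - ηhat| ≤ π * σ⁻¹ * |σ - η|)
    (hησ : η ≤ (4 * π + 1) / (4 * π) * σ) :
    |γ * σ / σhat - γ * η / ηhat| * ηhat ≤ ε * (γ * η) :=
  normalization_error_bound_general γ σ η σhat ηhat ε hγ hσ hηhat hσhalf hest hhat
end
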